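/- Let 0 < r ≤ 1/2 and let l₁, l₂ be unit segments in the plane at distances δ₁ < r and δ₂ < r from the origin O, in directions α₁ and α₂ respectively, with corresponding triangles Δᵢ = conv(lᵢ ∪ {O}). If the angular difference |α₁ − α₂| (mod π) is at least arcsin(δ₁/r) + arcsin(δ₂/r), then the interiors of Δ₁ \ B_r and Δ₂ \ B_r are disjoint, where B_r is the open disk of radius r about O. -/

import Mathlib

open MeasureTheory Metric Set

/-- The unit vector in direction `α`. -/
noncomputable def dirVec (α : ℝ) : EuclideanSpace ℝ (Fin 2) :=
  (WithLp.equiv 2 (Fin 2 → ℝ)).symm ![Real.cos α, Real.sin α]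

/-! The triangle `Δᵢ` lies in the closed strip `|⟪nᵢ, x⟫| ≤ δᵢ`, where `nᵢ` is the unit normal
to direction `αᵢ`, so a point `x` of its interior satisfies `|⟪nᵢ, x⟫| < δᵢ`. Writing
`x = ρ (cos θ, sin θ)` with `ρ > r` this says `|sin (θ - αᵢ)| < δᵢ / r`, i.e. `θ` is within
`arcsin (δᵢ / r)` of `αᵢ` in `ℝ / πℤ`. The triangle inequality in `ℝ / πℤ` then puts `α₁ - α₂`
closer than `arcsin (δ₁ / r) + arcsin (δ₂ / r)` to a multiple of `π`, against the separation
hypothesis. -/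

open Real
open scoped InnerProductSpace

section Strip

variable {E : Type*} [NormedAddCommGroup E] [InnerProductSpace ℝ E]

lemma abs_inner_le_infDist_affineSpan_pair {n p d : E} (hn : ‖n‖ ≤ 1) (hnd : ⟪n, d⟫_ℝ = 0) :
    |⟪n, p⟫_ℝ| ≤ infDist 0 (affineSpan ℝ {p, p + d} : Set E) := by
  refine (le_infDist ⟨p, left_mem_affineSpan_pair ℝ p (p + d)⟩).2 fun y hy => ?_
  obtain ⟨t, rfl⟩ := mem_affineSpan_pair_iff_exists_lineMap_eq.1 hy
  have hconst : ⟪n, AffineMap.lineMap p (p + d) t⟫_ℝ = ⟪n, p⟫_ℝ := by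
    simp [AffineMap.lineMap_apply, inner_add_right, inner_smul_right, hnd]
  calc |⟪n, p⟫_ℝ| = |⟪n, AffineMap.lineMap p (p + d) t⟫_ℝ| := by rw [hconst]
    _ ≤ ‖n‖ * ‖AffineMap.lineMap p (p + d) t‖ := abs_real_inner_le_norm _ _
    _ ≤ dist 0 (AffineMap.lineMap p (p + d) t) := by
      rw [dist_zero_left]; exact mul_le_of_le_one_left (norm_nonneg _) hn

lemma convexHull_subset_abs_inner_le {n p d : E} (hnd : ⟪n, d⟫_ℝ = 0) :
    convexHull ℝ {p, p + d, 0} ⊆ {x | |⟪n, x⟫_ℝ| ≤ |⟪n, p⟫_ℝ|} := by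
  have hconv : Convex ℝ {x : E | |⟪n, x⟫_ℝ| ≤ |⟪n, p⟫_ℝ|} := by
    simpa only [Set.preimage, mem_Icc, ← abs_le, innerₛₗ_apply_apply] using
      (convex_Icc (-|⟪n, p⟫_ℝ|) |⟪n, p⟫_ℝ|).linear_preimage (innerₛₗ ℝ n)
  refine convexHull_min ?_ hconv
  simp [insert_subset_iff, inner_add_right, hnd]

lemma abs_inner_lt_of_mem_interior {n x : E} {s : Set E} {c : ℝ} (hn : n ≠ 0)
    (hs : s ⊆ {y | |⟪n, y⟫_ℝ| ≤ c}) (hx : x ∈ interior s) : |⟪n, x⟫_ℝ| < c := by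
  have hsurj : Function.Surjective (innerₛₗ ℝ n) := fun t =>
    ⟨(t / ⟪n, n⟫_ℝ) • n, by
      rw [innerₛₗ_apply_apply, inner_smul_right, div_mul_cancel₀ _ (inner_self_ne_zero.2 hn)]⟩
  have hopen := (innerₛₗ ℝ n).isOpenMap_of_finiteDimensional hsurj
  have hstrip : {y | |⟪n, y⟫_ℝ| ≤ c} = innerₛₗ ℝ n ⁻¹' Icc (-c) c := by
    ext y; simp [abs_le]
  have := interior_mono hs hx
  rw [hstrip, ← hopen.preimage_interior_eq_interior_preimage
    (continuous_const.inner continuous_id), interior_Icc] at this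
  exact abs_lt.2 this

lemma abs_inner_lt_infDist_of_mem_interior_convexHull {n p d x : E} (hn : ‖n‖ = 1)
    (hnd : ⟪n, d⟫_ℝ = 0) (hx : x ∈ interior (convexHull ℝ {p, p + d, 0})) :
    |⟪n, x⟫_ℝ| < infDist 0 (affineSpan ℝ {p, p + d} : Set E) :=
  abs_inner_lt_of_mem_interior (norm_ne_zero_iff.1 (by simp [hn]))
    (fun _ hy => (convexHull_subset_abs_inner_le hnd hy).trans
      (abs_inner_le_infDist_affineSpan_pair hn.le hnd)) hx

end Strip

lemma lt_dist_of_mem_interior_diff_ball {E : Type*} [SeminormedAddCommGroup E] [NormedSpace ℝ E]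
    {s : Set E} {a x : E} {r : ℝ} (hr : 0 < r) (hx : x ∈ interior (s \ ball a r)) :
    r < dist x a := by
  have := interior_mono (sdiff_subset_compl s _) hx
  rw [interior_compl, closure_ball a hr.ne'] at this
  simpa using this

lemma inner_dirVec_dirVec (a b : ℝ) : ⟪dirVec a, dirVec b⟫_ℝ = cos (a - b) := by
  simp only [dirVec, WithLp.equiv_symm_apply, PiLp.inner_apply, RCLike.inner_apply,
    ringHom_apply, Fin.sum_univ_two, Matrix.cons_val_zero, Matrix.cons_val_one, cos_sub]
  ring

lemma inner_dirVec_add_pi_div_two_dirVec (α θ : ℝ) :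
    ⟪dirVec (α + π / 2), dirVec θ⟫_ℝ = sin (θ - α) := by
  rw [inner_dirVec_dirVec, ← cos_pi_div_two_sub]
  ring_nf

lemma norm_dirVec (α : ℝ) : ‖dirVec α‖ = 1 := by
  simp [EuclideanSpace.norm_eq, dirVec, Fin.sum_univ_two]

lemma exists_eq_norm_smul_dirVec (x : EuclideanSpace ℝ (Fin 2)) : ∃ θ, x = ‖x‖ • dirVec θ := by
  let z : ℂ := ⟨x 0, x 1⟩
  have hz : ‖z‖ = ‖x‖ := by
    simp [z, Complex.norm_def, Complex.normSq_mk, EuclideanSpace.norm_eq, Fin.sum_univ_two, sq]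
  refine ⟨Complex.arg z, ?_⟩
  ext i
  fin_cases i <;> simp [dirVec, ← hz, Complex.norm_mul_cos_arg, Complex.norm_mul_sin_arg, z]

lemma abs_sin_eq_sin_norm_coe_addCircle (t : ℝ) : |sin t| = sin ‖(t : AddCircle π)‖ := by
  have hle := AddCircle.norm_le_half_period π pi_ne_zero (x := t)
  rw [AddCircle.norm_eq, abs_of_pos pi_pos] at hle
  rw [AddCircle.norm_eq, ← abs_sin_eq_sin_abs_of_abs_le_pi (by linarith [pi_pos]),
    sin_sub_int_mul_pi, abs_mul, abs_neg_one_zpow, one_mul]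

lemma norm_coe_addCircle_lt_of_abs_sin_lt {t β : ℝ} (hβ₀ : 0 ≤ β) (hβ : β ≤ π / 2)
    (h : |sin t| < sin β) : ‖(t : AddCircle π)‖ < β := by
  by_contra! hle
  have hhalf := AddCircle.norm_le_half_period π pi_ne_zero (x := t)
  rw [abs_of_pos pi_pos] at hhalf
  rw [abs_sin_eq_sin_norm_coe_addCircle] at h
  exact h.not_ge (sin_le_sin_of_le_of_le_pi_div_two (by linarith) hhalf hle)

lemma min_abs_le_norm_coe_addCircle {p : ℝ} (hp : 0 ≤ p) (x : ℝ) :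
    min |x| (p - |x|) ≤ ‖(x : AddCircle p)‖ := by
  rw [AddCircle.norm_eq]
  generalize round (p⁻¹ * x) = k
  obtain hk | rfl | hk := lt_trichotomy k 0
  · have hk' : (k : ℝ) ≤ -1 := by exact_mod_cast Int.le_sub_one_of_lt hk
    refine (min_le_right _ _).trans ?_
    nlinarith [le_abs_self (x - k * p), neg_abs_le x]
  · simp
  · have hk' : (1 : ℝ) ≤ k := by exact_mod_cast hk
    refine (min_le_right _ _).trans ?_
    nlinarith [neg_abs_le (x - k * p), le_abs_self x]

lemma norm_coe_sub_lt_arcsin {r δ α θ ρ : ℝ} (hr : 0 < r) (hδ : 0 ≤ δ) (hδr : δ ≤ r) (hρ : r < ρ)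
    (h : |⟪dirVec (α + π / 2), ρ • dirVec θ⟫_ℝ| < δ) :
    ‖((θ - α : ℝ) : AddCircle π)‖ < arcsin (δ / r) := by
  refine norm_coe_addCircle_lt_of_abs_sin_lt (arcsin_nonneg.2 (by positivity))
    (arcsin_le_pi_div_two _) ?_
  rw [sin_arcsin (by linarith [div_nonneg hδ hr.le]) ((div_le_one hr).2 hδr), lt_div_iff₀ hr]
  rw [inner_smul_right, inner_dirVec_add_pi_div_two_dirVec, abs_mul, abs_of_pos (hr.trans hρ)] at h
  nlinarith [abs_nonneg (sin (θ - α))]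

theorem exterior_parts_disjoint_general (r α₁ α₂ δ₁ δ₂ : ℝ)
    (p₁ p₂ : EuclideanSpace ℝ (Fin 2))
    (hr1 : 0 < r)
    (hδ₁ : Metric.infDist 0
      (affineSpan ℝ {p₁, p₁ + dirVec α₁} : Set (EuclideanSpace ℝ (Fin 2))) = δ₁)
    (hδ₂ : Metric.infDist 0
      (affineSpan ℝ {p₂, p₂ + dirVec α₂} : Set (EuclideanSpace ℝ (Fin 2))) = δ₂)
    (hδ₁r : δ₁ < r) (hδ₂r : δ₂ < r)
    (hsep : Real.arcsin (δ₁ / r) + Real.arcsin (δ₂ / r) ≤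
      min |α₁ - α₂| (Real.pi - |α₁ - α₂|)) :
    interior ((convexHull ℝ {p₁, p₁ + dirVec α₁, (0 : EuclideanSpace ℝ (Fin 2))}) \ ball 0 r) ∩
      interior ((convexHull ℝ {p₂, p₂ + dirVec α₂, (0 : EuclideanSpace ℝ (Fin 2))}) \ ball 0 r)
      = ∅ := by
  refine eq_empty_of_forall_notMem fun x ⟨hx₁, hx₂⟩ => ?_
  obtain ⟨θ, hθ⟩ := exists_eq_norm_smul_dirVec x
  have hclose {α δ : ℝ} {p : EuclideanSpace ℝ (Fin 2)}
      (hδ : infDist 0 (affineSpan ℝ {p, p + dirVec α} : Set (EuclideanSpace ℝ (Fin 2))) = δ)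
      (hδr : δ < r) (hx : x ∈ interior (convexHull ℝ {p, p + dirVec α, 0} \ ball 0 r)) :
      ‖((θ - α : ℝ) : AddCircle π)‖ < arcsin (δ / r) := by
    subst hδ
    refine norm_coe_sub_lt_arcsin hr1 infDist_nonneg hδr.le
      (by simpa using lt_dist_of_mem_interior_diff_ball hr1 hx) ?_
    rw [← hθ]
    refine abs_inner_lt_infDist_of_mem_interior_convexHull (norm_dirVec _) ?_
      (interior_mono sdiff_subset hx)
    rw [inner_dirVec_add_pi_div_two_dirVec, sub_self, sin_zero]
  have hsum : ‖((α₁ - α₂ : ℝ) : AddCircle π)‖ < arcsin (δ₁ / r) + arcsin (δ₂ / r) :=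
    calc ‖((α₁ - α₂ : ℝ) : AddCircle π)‖
        = ‖((θ - α₂ : ℝ) : AddCircle π) - ((θ - α₁ : ℝ) : AddCircle π)‖ := by
          rw [← AddCircle.coe_sub, sub_sub_sub_cancel_left]
      _ ≤ ‖((θ - α₂ : ℝ) : AddCircle π)‖ + ‖((θ - α₁ : ℝ) : AddCircle π)‖ := norm_sub_le _ _
      _ < arcsin (δ₁ / r) + arcsin (δ₂ / r) := by
          linarith [hclose hδ₁ hδ₁r hx₁, hclose hδ₂ hδ₂r hx₂]
  linarith [min_abs_le_norm_coe_addCircle pi_pos.le (α₁ - α₂)]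

/-- If two unit needles in directions `α₁, α₂ ∈ [0,π)` are at distances `δ₁, δ₂ < r` from
the origin and their angular separation (mod π) is at least `arcsin(δ₁/r) + arcsin(δ₂/r)`,
then the interiors of the exterior parts `Δᵢ \ B_r` of the corresponding triangles are
disjoint. -/
theorem exterior_parts_disjoint (r α₁ α₂ δ₁ δ₂ : ℝ)
    (p₁ p₂ : EuclideanSpace ℝ (Fin 2))
    (hr1 : 0 < r) (hr2 : r ≤ 1 / 2)
    (hα₁ : α₁ ∈ Set.Ico 0 Real.pi) (hα₂ : α₂ ∈ Set.Ico 0 Real.pi)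
    (hδ₁ : Metric.infDist 0
      (affineSpan ℝ {p₁, p₁ + dirVec α₁} : Set (EuclideanSpace ℝ (Fin 2))) = δ₁)
    (hδ₂ : Metric.infDist 0
      (affineSpan ℝ {p₂, p₂ + dirVec α₂} : Set (EuclideanSpace ℝ (Fin 2))) = δ₂)
    (hδ₁r : δ₁ < r) (hδ₂r : δ₂ < r)
    (hsep : Real.arcsin (δ₁ / r) + Real.arcsin (δ₂ / r) ≤
      min |α₁ - α₂| (Real.pi - |α₁ - α₂|)) :
    interior ((convexHull ℝ {p₁, p₁ + dirVec α₁, (0 : EuclideanSpace ℝ (Fin 2))}) \ ball 0 r) ∩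
      interior ((convexHull ℝ {p₂, p₂ + dirVec α₂, (0 : EuclideanSpace ℝ (Fin 2))}) \ ball 0 r)
      = ∅ :=
  exterior_parts_disjoint_general r α₁ α₂ δ₁ δ₂ p₁ p₂ hr1 hδ₁ hδ₂ hδ₁r hδ₂r hsep
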